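/- arXiv:2604.08798 — 7 statements merged into one kernel-verified Lean document; each statement's English description precedes it below -/
import Mathlib

section
/- Let Y be integrable, G ∈ {0,1}, p ∈ [0,1], and X a random variable in a measurable space. Suppose E[Y | G, p, X] = μ(X) + τ·G a.s. for a measurable function μ and scalar τ, and E[G | p, X] = p a.s. Define m(X) := E[Y | X] and r(X) := E[p | X]. Then m(X) = μ(X) + τ·r(X) almost surely. -/
/-! Condition both hypotheses down to `σ(X)` by the tower property: the mean model gives
`E[Y | X] = μ(X) + τ E[G | X]`, and calibration gives `E[G | X] = E[p | X]`. -/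

open MeasureTheory ProbabilityTheory

noncomputable section

/-- σ-algebra generated by a random variable. -/
def mSig {Ω α : Type*} [MeasurableSpace α] (f : Ω → α) : MeasurableSpace Ω :=
  MeasurableSpace.comap f inferInstance

section

variable {Ω : Type*} {m m' m₀ : MeasurableSpace Ω} {P : Measure Ω} [IsFiniteMeasure P]

theorem condExp_ae_eq_condExp_of_condExp_ae_eq {f g : Ω → ℝ} (hmm' : m ≤ m') (hm' : m' ≤ m₀)
    (h : P[f | m'] =ᵐ[P] g) : P[f | m] =ᵐ[P] P[g | m] :=
  (condExp_condExp_of_le hmm' hm').symm.trans (condExp_congr_ae h)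

theorem condExp_add_of_stronglyMeasurable_left {f g : Ω → ℝ} (hm : m ≤ m₀)
    (hfm : StronglyMeasurable[m] f) (hf : Integrable f P) (hg : Integrable g P) :
    P[f + g | m] =ᵐ[P] f + P[g | m] := by
  simpa only [condExp_of_stronglyMeasurable hm hfm hf] using condExp_add hf hg m

end

theorem stmt1_general {Ω 𝓧 : Type*} [MeasurableSpace Ω] [MeasurableSpace 𝓧]
    (P : Measure Ω) [IsProbabilityMeasure P]
    (X : Ω → 𝓧) (Y p G : Ω → ℝ) (μf : 𝓧 → ℝ) (τ : ℝ)
    (hX : Measurable X) (hp : Measurable p) (hG : Measurable G)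
    (hμf : Measurable μf)
    (hG01 : ∀ ω, G ω = 0 ∨ G ω = 1)
    (hmean : P[Y | mSig G ⊔ mSig p ⊔ mSig X] =ᵐ[P] fun ω => μf (X ω) + τ * G ω)
    (hcal : P[G | mSig p ⊔ mSig X] =ᵐ[P] p) :
    P[Y | mSig X] =ᵐ[P] fun ω => μf (X ω) + τ * ((P[p | mSig X]) ω) := by
  have hGint : Integrable G P :=
    .of_bound hG.aestronglyMeasurable 1 <| ae_of_all _ fun ω => by rcases hG01 ω with h | h <;> simp [h]
  have hμXint : Integrable (fun ω => μf (X ω)) P :=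
    ((integrable_condExp.congr hmean).sub (hGint.const_mul τ)).congr <|
      ae_of_all _ fun ω => add_sub_cancel_right _ _
  have hμXmeas : StronglyMeasurable[mSig X] fun ω => μf (X ω) :=
    (hμf.comp (comap_measurable X)).stronglyMeasurable
  calc P[Y | mSig X]
      =ᵐ[P] P[(fun ω => μf (X ω)) + τ • G | mSig X] :=
        condExp_ae_eq_condExp_of_condExp_ae_eq le_sup_right
          (sup_le (sup_le hG.comap_le hp.comap_le) hX.comap_le) hmean
    _ =ᵐ[P] (fun ω => μf (X ω)) + P[τ • G | mSig X] :=
        condExp_add_of_stronglyMeasurable_left hX.comap_le hμXmeas hμXint (hGint.const_mul τ)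
    _ =ᵐ[P] (fun ω => μf (X ω)) + τ • P[G | mSig X] := .add .rfl (condExp_smul τ G _)
    _ =ᵐ[P] (fun ω => μf (X ω)) + τ • P[p | mSig X] :=
        .add .rfl <| .const_smul (condExp_ae_eq_condExp_of_condExp_ae_eq le_sup_right
          (sup_le hp.comap_le hX.comap_le) hcal) τ

theorem stmt1 {Ω 𝓧 : Type*} [MeasurableSpace Ω] [MeasurableSpace 𝓧]
    (P : Measure Ω) [IsProbabilityMeasure P]
    (X : Ω → 𝓧) (Y p G : Ω → ℝ) (μf : 𝓧 → ℝ) (τ : ℝ)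
    (hX : Measurable X) (hp : Measurable p) (hG : Measurable G)
    (hμf : Measurable μf) (hY : Integrable Y P)
    (hp01 : ∀ ω, p ω ∈ Set.Icc (0:ℝ) 1)
    (hG01 : ∀ ω, G ω = 0 ∨ G ω = 1)
    (hmean : P[Y | mSig G ⊔ mSig p ⊔ mSig X] =ᵐ[P] fun ω => μf (X ω) + τ * G ω)
    (hcal : P[G | mSig p ⊔ mSig X] =ᵐ[P] p) :
    P[Y | mSig X] =ᵐ[P] fun ω => μf (X ω) + τ * ((P[p | mSig X]) ω) :=
  stmt1_general P X Y p G μf τ hX hp hG hμf hG01 hmean hcal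
end
end

section
/- Under the structural mean model E[Y | G, p, X] = μ(X) + τ·G a.s. and conditional calibration E[G | p, X] = p a.s., the outcome residual R := Y − m(X) (with m(X) = E[Y | X]) satisfies E[R | G, p, X] = τ·(G − r(X)) almost surely, where r(X) = E[p | X]. Equivalently, R = τ(G − r(X)) + ε with E[ε | G, p, X] = 0. -/
open MeasureTheory ProbabilityTheory

noncomputable section

/-!
Both conditional means of `Y` are obtained from the structural model by the tower property:
conditioning `μ(X) + τ G` on `(p, X)` turns `G` into `p` by calibration, and conditioning once
more on `X` turns `p` into `r(X)`, while `μ(X)` passes through both. Since `m(X)` is measurable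
for the finest σ-algebra, `E[Y - m(X) | G, p, X] = (μ(X) + τ G) - (μ(X) + τ r(X))`.
-/

section CondExp

variable {Ω : Type*} {m₀ m₁ m₂ : MeasurableSpace Ω} {μ : Measure[m₀] Ω}
  [IsFiniteMeasure μ]

theorem condExp_eq_add_mul_condExp_of_condExp_eq {Y g f : Ω → ℝ} {c : ℝ}
    (h₂₁ : m₂ ≤ m₁) (h₁ : m₁ ≤ m₀) (hg : StronglyMeasurable[m₂] g) (hf : Integrable f μ)
    (hY : μ[Y | m₁] =ᵐ[μ] fun ω => g ω + c * f ω) :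
    μ[Y | m₂] =ᵐ[μ] fun ω => g ω + c * μ[f | m₂] ω := by
  have hcf : Integrable (fun ω => c * f ω) μ := hf.const_mul c
  have hgi : Integrable g μ := by
    refine ((integrable_condExp.congr hY).sub hcf).congr
      (Filter.Eventually.of_forall fun ω => ?_)
    simp
  calc μ[Y | m₂] =ᵐ[μ] μ[μ[Y | m₁] | m₂] := (condExp_condExp_of_le h₂₁ h₁).symm
    _ =ᵐ[μ] μ[g + c • f | m₂] := condExp_congr_ae hY
    _ =ᵐ[μ] μ[g | m₂] + μ[c • f | m₂] := condExp_add hgi hcf _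
    _ =ᵐ[μ] g + c • μ[f | m₂] := by
      rw [condExp_of_stronglyMeasurable (h₂₁.trans h₁) hg hgi]
      exact Filter.EventuallyEq.rfl.add (condExp_smul c f m₂)

theorem condExp_sub_condExp_of_le {Y : Ω → ℝ} (h₂₁ : m₂ ≤ m₁) (h₁ : m₁ ≤ m₀)
    (hY : Integrable Y μ) :
    μ[fun ω => Y ω - μ[Y | m₂] ω | m₁] =ᵐ[μ] μ[Y | m₁] - μ[Y | m₂] := by
  refine (condExp_sub hY integrable_condExp m₁).trans ?_
  rw [condExp_of_stronglyMeasurable h₁ (stronglyMeasurable_condExp.mono h₂₁)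
    integrable_condExp]

end CondExp

theorem integrable_of_forall_eq_zero_or_eq_one {Ω : Type*} [MeasurableSpace Ω]
    {P : Measure Ω} [IsFiniteMeasure P] {G : Ω → ℝ} (hG : Measurable G)
    (hG01 : ∀ ω, G ω = 0 ∨ G ω = 1) :
    Integrable G P := by
  refine (memLp_top_of_bound hG.aestronglyMeasurable 1
    (Filter.Eventually.of_forall fun ω => ?_)).integrable le_top
  rcases hG01 ω with h | h <;> simp [h]

theorem stmt2_general {Ω 𝓧 : Type*} [MeasurableSpace Ω] [MeasurableSpace 𝓧]
    (P : Measure Ω) [IsProbabilityMeasure P]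
    (X : Ω → 𝓧) (Y p G : Ω → ℝ) (μf : 𝓧 → ℝ) (τ : ℝ)
    (hX : Measurable X) (hp : Measurable p) (hG : Measurable G)
    (hμf : Measurable μf) (hY : Integrable Y P)
    (hG01 : ∀ ω, G ω = 0 ∨ G ω = 1)
    (hmean : P[Y | mSig G ⊔ mSig p ⊔ mSig X] =ᵐ[P] fun ω => μf (X ω) + τ * G ω)
    (hcal : P[G | mSig p ⊔ mSig X] =ᵐ[P] p) :
    P[fun ω => Y ω - (P[Y | mSig X]) ω | mSig G ⊔ mSig p ⊔ mSig X]
      =ᵐ[P] fun ω => τ * (G ω - (P[p | mSig X]) ω) := by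
  have hX_le : mSig X ≤ ‹MeasurableSpace Ω› := hX.comap_le
  have hpX_le : mSig p ⊔ mSig X ≤ ‹MeasurableSpace Ω› := sup_le hp.comap_le hX_le
  have hGpX_le : mSig G ⊔ mSig p ⊔ mSig X ≤ ‹MeasurableSpace Ω› :=
    sup_le (sup_le hG.comap_le hp.comap_le) hX_le
  have hμX : StronglyMeasurable[mSig X] (fun ω => μf (X ω)) :=
    (hμf.comp (comap_measurable X)).stronglyMeasurable
  have hpX_le_GpX : mSig p ⊔ mSig X ≤ mSig G ⊔ mSig p ⊔ mSig X :=
    sup_le_sup_right le_sup_right _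
  have hp_int : Integrable p P := integrable_condExp.congr hcal
  have hmean_pX : P[Y | mSig p ⊔ mSig X] =ᵐ[P] fun ω => μf (X ω) + τ * p ω := by
    refine (condExp_eq_add_mul_condExp_of_condExp_eq hpX_le_GpX hGpX_le (hμX.mono le_sup_right)
      (integrable_of_forall_eq_zero_or_eq_one hG hG01) hmean).trans ?_
    filter_upwards [hcal] with ω hω
    rw [hω]
  have hmean_X : P[Y | mSig X] =ᵐ[P] fun ω => μf (X ω) + τ * P[p | mSig X] ω :=
    condExp_eq_add_mul_condExp_of_condExp_eq le_sup_right hpX_le hμX hp_int hmean_pX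
  filter_upwards [condExp_sub_condExp_of_le le_sup_right hGpX_le hY, hmean, hmean_X]
    with ω hres h₁ h₂
  rw [hres, Pi.sub_apply, h₁, h₂]
  ring

theorem stmt2 {Ω 𝓧 : Type*} [MeasurableSpace Ω] [MeasurableSpace 𝓧]
    (P : Measure Ω) [IsProbabilityMeasure P]
    (X : Ω → 𝓧) (Y p G : Ω → ℝ) (μf : 𝓧 → ℝ) (τ : ℝ)
    (hX : Measurable X) (hp : Measurable p) (hG : Measurable G)
    (hμf : Measurable μf) (hY : Integrable Y P)
    (hp01 : ∀ ω, p ω ∈ Set.Icc (0:ℝ) 1)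
    (hG01 : ∀ ω, G ω = 0 ∨ G ω = 1)
    (hmean : P[Y | mSig G ⊔ mSig p ⊔ mSig X] =ᵐ[P] fun ω => μf (X ω) + τ * G ω)
    (hcal : P[G | mSig p ⊔ mSig X] =ᵐ[P] p) :
    P[fun ω => Y ω - (P[Y | mSig X]) ω | mSig G ⊔ mSig p ⊔ mSig X]
      =ᵐ[P] fun ω => τ * (G ω - (P[p | mSig X]) ω) :=
  stmt2_general P X Y p G μf τ hX hp hG hμf hY hG01 hmean hcal
end
end

section
/- Suppose Y and p have finite second moments, E[Y | G, p, X] = μ(X) + τ·G a.s., and E[G | p, X] = p a.s. Let m(X) = E[Y | X], r(X) = E[p | X], and V* = E[(p − r(X))²]. Then E[(2p − 1)(Y − m(X))] = 2τ·V*. -/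
/-! By the tower property and calibration `E[G | p, X] = p`, the outcome model gives
`E[Y | p, X] = μ(X) + τ p` and then `E[Y | X] = μ(X) + τ r(X)`. Since `2p - 1` is
`(p, X)`-measurable, it is orthogonal to `Y - E[Y | p, X]`, so its covariance with `Y - m(X)` is
that with `τ (p - r(X))`. Finally `(2p - 1)(p - r) = 2 (p - r)² + (2r - 1)(p - r)`, and the last
term integrates to zero because `p - r(X)` is orthogonal to every square-integrable function
of `X`. -/

open MeasureTheory ProbabilityTheory

noncomputable section

namespace CondExpMoment

variable {Ω : Type*} {m m₁ m₂ : MeasurableSpace Ω} [m₀ : MeasurableSpace Ω]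
  {P : Measure Ω} [IsFiniteMeasure P]

theorem integral_mul_sub_condExp_eq_zero (hm : m ≤ m₀) {f g : Ω → ℝ}
    (hf : StronglyMeasurable[m] f) (hfg : Integrable (f * g) P) (hg : Integrable g P) :
    ∫ ω, f ω * (g ω - P[g|m] ω) ∂P = 0 := by
  have hpull : P[f * g|m] =ᵐ[P] f * P[g|m] := condExp_mul_of_stronglyMeasurable_left hf hfg hg
  have hfc : Integrable (f * P[g|m]) P := integrable_condExp.congr hpull
  calc ∫ ω, f ω * (g ω - P[g|m] ω) ∂P = ∫ ω, (f * g) ω ∂P - ∫ ω, (f * P[g|m]) ω ∂P := by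
        rw [← integral_sub hfg hfc]; simp only [Pi.mul_apply, mul_sub]
    _ = 0 := by rw [← integral_condExp hm, integral_congr_ae hpull, sub_self]

theorem condExp_eq_add_mul_condExp_of_le (h₁₂ : m₁ ≤ m₂) (h₂ : m₂ ≤ m₀) {Y a Z : Ω → ℝ} (c : ℝ)
    (ha : StronglyMeasurable[m₁] a) (ha_int : Integrable a P) (hZ : Integrable Z P)
    (h : P[Y|m₂] =ᵐ[P] fun ω => a ω + c * Z ω) :
    P[Y|m₁] =ᵐ[P] fun ω => a ω + c * P[Z|m₁] ω := by
  calc P[Y|m₁] =ᵐ[P] P[P[Y|m₂]|m₁] := (condExp_condExp_of_le h₁₂ h₂).symm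
    _ =ᵐ[P] P[a + c • Z|m₁] := condExp_congr_ae h
    _ =ᵐ[P] P[a|m₁] + P[c • Z|m₁] := condExp_add ha_int (hZ.smul c) m₁
    _ =ᵐ[P] a + c • P[Z|m₁] := by
      rw [condExp_of_stronglyMeasurable (h₁₂.trans h₂) ha ha_int]
      exact (condExp_smul c Z m₁).add_left

theorem integral_mul_sub_condExp_eq_mul_integral_mul_sub_condExp (h₁₂ : m₁ ≤ m₂) (h₂ : m₂ ≤ m₀)
    {Y Z s a : Ω → ℝ} (c : ℝ) (hY : MemLp Y 2 P) (hZ : MemLp Z 2 P)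
    (hs : StronglyMeasurable[m₂] s) (hs2 : MemLp s 2 P)
    (ha : StronglyMeasurable[m₁] a) (ha_int : Integrable a P)
    (h : P[Y|m₂] =ᵐ[P] fun ω => a ω + c * Z ω) :
    ∫ ω, s ω * (Y ω - P[Y|m₁] ω) ∂P = c * ∫ ω, s ω * (Z ω - P[Z|m₁] ω) ∂P := by
  have hY₂ : MemLp (P[Y|m₂]) 2 P := hY.condExp one_le_two
  have hY₁ : MemLp (P[Y|m₁]) 2 P := hY.condExp one_le_two
  have hdiff : (fun ω => s ω * (P[Y|m₂] ω - P[Y|m₁] ω))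
      =ᵐ[P] fun ω => c * (s ω * (Z ω - P[Z|m₁] ω)) := by
    filter_upwards [h, condExp_eq_add_mul_condExp_of_le h₁₂ h₂ c ha ha_int
      (hZ.integrable one_le_two) h] with ω h₂ω h₁ω
    rw [h₂ω, h₁ω]; ring
  calc ∫ ω, s ω * (Y ω - P[Y|m₁] ω) ∂P
        = ∫ ω, s ω * (Y ω - P[Y|m₂] ω) ∂P + ∫ ω, s ω * (P[Y|m₂] ω - P[Y|m₁] ω) ∂P := by
        have h₂int : Integrable (fun ω => s ω * (Y ω - P[Y|m₂] ω)) P :=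
          hs2.integrable_mul (hY.sub hY₂)
        have h₁₂int : Integrable (fun ω => s ω * (P[Y|m₂] ω - P[Y|m₁] ω)) P :=
          hs2.integrable_mul (hY₂.sub hY₁)
        rw [← integral_add h₂int h₁₂int]
        congr 1 with ω; ring
    _ = c * ∫ ω, s ω * (Z ω - P[Z|m₁] ω) ∂P := by
        rw [integral_mul_sub_condExp_eq_zero h₂ hs (hs2.integrable_mul hY)
          (hY.integrable one_le_two), integral_congr_ae hdiff, integral_const_mul, zero_add]

theorem integral_affine_mul_sub_condExp (hm : m ≤ m₀) {p : Ω → ℝ} (hp : MemLp p 2 P) (c d : ℝ) :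
    ∫ ω, (c * p ω + d) * (p ω - P[p|m] ω) ∂P = c * ∫ ω, (p ω - P[p|m] ω) ^ 2 ∂P := by
  set r := P[p|m]
  have hr : MemLp r 2 P := hp.condExp one_le_two
  have hcrd : MemLp (fun ω => c * r ω + d) 2 P := (hr.const_mul c).add (memLp_const d)
  have hcrd_meas : StronglyMeasurable[m] fun ω => c * r ω + d :=
    (stronglyMeasurable_condExp.const_mul c).add_const d
  calc ∫ ω, (c * p ω + d) * (p ω - r ω) ∂P
        = c * ∫ ω, (p ω - r ω) ^ 2 ∂P + ∫ ω, (c * r ω + d) * (p ω - r ω) ∂P := by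
        have hsq : Integrable (fun ω => c * (p ω - r ω) ^ 2) P :=
          (hp.sub hr).integrable_sq.const_mul c
        have hres : Integrable (fun ω => (c * r ω + d) * (p ω - r ω)) P :=
          hcrd.integrable_mul (hp.sub hr)
        rw [← integral_const_mul, ← integral_add hsq hres]
        congr 1 with ω; ring
    _ = c * ∫ ω, (p ω - r ω) ^ 2 ∂P := by
        rw [integral_mul_sub_condExp_eq_zero hm hcrd_meas (hcrd.integrable_mul hp)
          (hp.integrable one_le_two), add_zero]

end CondExpMoment

open CondExpMoment in
theorem stmt3 {Ω 𝓧 : Type*} [MeasurableSpace Ω] [MeasurableSpace 𝓧]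
    (P : Measure Ω) [IsProbabilityMeasure P]
    (X : Ω → 𝓧) (Y p G : Ω → ℝ) (μf : 𝓧 → ℝ) (τ : ℝ)
    (hX : Measurable X) (hp : Measurable p) (hG : Measurable G)
    (hμf : Measurable μf) (hY2 : MemLp Y 2 P)
    (hp01 : ∀ ω, p ω ∈ Set.Icc (0:ℝ) 1)
    (hG01 : ∀ ω, G ω = 0 ∨ G ω = 1)
    (hmean : P[Y | mSig G ⊔ mSig p ⊔ mSig X] =ᵐ[P] fun ω => μf (X ω) + τ * G ω)
    (hcal : P[G | mSig p ⊔ mSig X] =ᵐ[P] p) :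
    ∫ ω, (2 * p ω - 1) * (Y ω - (P[Y | mSig X]) ω) ∂P
      = 2 * τ * ∫ ω, (p ω - (P[p | mSig X]) ω) ^ 2 ∂P := by
  have hmX : mSig X ≤ ‹MeasurableSpace Ω› := hX.comap_le
  have hmpX : mSig p ⊔ mSig X ≤ ‹MeasurableSpace Ω› := sup_le hp.comap_le hmX
  have hmGpX : mSig G ⊔ mSig p ⊔ mSig X ≤ ‹MeasurableSpace Ω› :=
    sup_le (sup_le hG.comap_le hp.comap_le) hmX
  have hp2 : MemLp p 2 P := MemLp.of_bound hp.aestronglyMeasurable 1 <|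
    ae_of_all _ fun ω => abs_le.2 ⟨by linarith [(hp01 ω).1], (hp01 ω).2⟩
  have hG_int : Integrable G P := MemLp.integrable le_top <|
    MemLp.of_bound hG.aestronglyMeasurable 1 <|
      ae_of_all _ fun ω => by rcases hG01 ω with h | h <;> simp [h]
  have hμX : StronglyMeasurable[mSig X] fun ω => μf (X ω) :=
    (hμf.comp (comap_measurable X)).stronglyMeasurable
  have hμ_int : Integrable (fun ω => μf (X ω)) P :=
    ((integrable_condExp.congr hmean).sub (hG_int.const_mul τ)).congr
      (ae_of_all _ fun ω => by simp)
  have hYpX : P[Y | mSig p ⊔ mSig X] =ᵐ[P] fun ω => μf (X ω) + τ * p ω := by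
    filter_upwards [condExp_eq_add_mul_condExp_of_le (sup_le (le_sup_of_le_left le_sup_right)
      le_sup_right) hmGpX τ (hμX.mono le_sup_right) hμ_int hG_int hmean, hcal] with ω hω hcalω
    rw [hω, hcalω]
  have hp_pX : Measurable[mSig p ⊔ mSig X] p := (comap_measurable p).mono le_sup_left le_rfl
  have hs : StronglyMeasurable[mSig p ⊔ mSig X] fun ω => 2 * p ω - 1 :=
    ((hp_pX.const_mul 2).sub_const 1).stronglyMeasurable
  have haffine := integral_affine_mul_sub_condExp hmX hp2 2 (-1)
  simp only [← sub_eq_add_neg] at haffine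
  rw [integral_mul_sub_condExp_eq_mul_integral_mul_sub_condExp le_sup_right hmpX τ hY2 hp2 hs
    ((hp2.const_mul 2).sub (memLp_const 1)) hμX hμ_int hYpX, haffine]
  ring
end
end

section
/- Under the structural mean model and conditional calibration assumptions with finite second moments, if additionally V* := E[(p − r(X))²] > 0, then the structural coefficient is identified by τ = E[(2p − 1)(Y − m(X))] / (2·E[(p − r(X))²]). -/
/-!
Put `q = 2p - 1`, a bounded function of `p`. For a bounded `𝓜`-measurable `q` one has
`E[q (g - h)] = E[q (E[g | 𝓜] - h)]`. Applied with `𝓜 = σ(G, p, X)` this replaces `Y` by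
`μ(X) + τ G`, and by the tower property `m(X) = μ(X) + τ r(X)`, so the numerator becomes
`τ E[q (G - r(X))]`; applied with `𝓜 = σ(p, X)` it replaces `G` by `p`. Finally
`q (p - r) = 2 (p - r)² + (2r - 1)(p - r)`, and the last term has mean zero because `2r(X) - 1`
is `σ(X)`-measurable.
-/

open MeasureTheory ProbabilityTheory

noncomputable section

section mSig

variable {Ω α : Type*} [MeasurableSpace α]

theorem measurable_mSig (f : Ω → α) : Measurable[mSig f] f :=
  comap_measurable f

theorem mSig_le [MeasurableSpace Ω] {f : Ω → α} (hf : Measurable f) :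
    mSig f ≤ ‹MeasurableSpace Ω› :=
  hf.comap_le

end mSig

section CondExp

variable {Ω : Type*} {m mΩ : MeasurableSpace Ω} {μ : Measure Ω}

theorem integral_mul_condExp_of_stronglyMeasurable (hm : m ≤ mΩ)
    [SigmaFinite (μ.trim hm)] {f g : Ω → ℝ} {C : ℝ} (hf : StronglyMeasurable[m] f)
    (hfC : ∀ᵐ ω ∂μ, ‖f ω‖ ≤ C) (hg : Integrable g μ) :
    ∫ ω, f ω * μ[g|m] ω ∂μ = ∫ ω, f ω * g ω ∂μ := by
  have hfg : Integrable (f * g) μ := hg.bdd_mul (hf.mono hm).aestronglyMeasurable hfC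
  calc ∫ ω, f ω * μ[g|m] ω ∂μ = ∫ ω, μ[f * g|m] ω ∂μ :=
        integral_congr_ae (condExp_mul_of_stronglyMeasurable_left hf hfg hg).symm
    _ = ∫ ω, f ω * g ω ∂μ := integral_condExp hm

theorem integral_mul_sub_eq_integral_mul_condExp_sub (hm : m ≤ mΩ)
    [SigmaFinite (μ.trim hm)] {f g h : Ω → ℝ} {C : ℝ} (hf : StronglyMeasurable[m] f)
    (hfC : ∀ᵐ ω ∂μ, ‖f ω‖ ≤ C) (hg : Integrable g μ) (hh : Integrable h μ) :
    ∫ ω, f ω * (g ω - h ω) ∂μ = ∫ ω, f ω * (μ[g|m] ω - h ω) ∂μ := by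
  have hf' : AEStronglyMeasurable f μ := (hf.mono hm).aestronglyMeasurable
  simp only [mul_sub]
  rw [integral_sub (hg.bdd_mul hf' hfC) (hh.bdd_mul hf' hfC),
    integral_sub (integrable_condExp.bdd_mul hf' hfC) (hh.bdd_mul hf' hfC),
    integral_mul_condExp_of_stronglyMeasurable hm hf hfC hg]

theorem condExp_add_const_mul_of_stronglyMeasurable (hm : m ≤ mΩ)
    [SigmaFinite (μ.trim hm)] {f g : Ω → ℝ} (c : ℝ) (hf : StronglyMeasurable[m] f)
    (hfi : Integrable f μ) (hg : Integrable g μ) :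
    μ[fun ω => f ω + c * g ω|m] =ᵐ[μ] fun ω => f ω + c * μ[g|m] ω := by
  change μ[f + c • g|m] =ᵐ[μ] _
  filter_upwards [condExp_add hfi (hg.smul c) m, condExp_smul c g m] with ω hadd hsmul
  rw [hadd, Pi.add_apply, hsmul, condExp_of_stronglyMeasurable hm hf hfi]
  rfl

theorem condExp_ae_eq_add_const_mul_of_le [IsFiniteMeasure μ] {m' : MeasurableSpace Ω}
    (hmm' : m ≤ m') (hm' : m' ≤ mΩ) {Y f g : Ω → ℝ} {c : ℝ} (hf : StronglyMeasurable[m] f)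
    (hg : Integrable g μ) (hY : μ[Y|m'] =ᵐ[μ] fun ω => f ω + c * g ω) :
    μ[Y|m] =ᵐ[μ] fun ω => f ω + c * μ[g|m] ω := by
  have hfi : Integrable f μ :=
    ((integrable_condExp.congr hY).sub (hg.const_mul c)).congr (ae_of_all _ fun ω => by simp)
  exact (condExp_condExp_of_le hmm' hm').symm.trans ((condExp_congr_ae hY).trans
    (condExp_add_const_mul_of_stronglyMeasurable (hmm'.trans hm') c hf hfi hg))

theorem integral_two_mul_sub_one_mul_sub_condExp [IsFiniteMeasure μ] (hm : m ≤ mΩ)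
    {f : Ω → ℝ} {R : ℝ} (hf : AEStronglyMeasurable f μ) (hfR : ∀ᵐ ω ∂μ, |f ω| ≤ R) :
    ∫ ω, (2 * f ω - 1) * (f ω - μ[f|m] ω) ∂μ = 2 * ∫ ω, (f ω - μ[f|m] ω) ^ 2 ∂μ := by
  set r := μ[f|m]
  have hfi : Integrable f μ := (integrable_const R).mono' hf (by simpa using hfR)
  have hrR : ∀ᵐ ω ∂μ, |r ω| ≤ R := ae_bdd_abs_condExp_of_ae_bdd_abs hfR
  have hr : StronglyMeasurable[m] r := stronglyMeasurable_condExp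
  have hs : ∀ᵐ ω ∂μ, ‖2 * r ω - 1‖ ≤ 2 * R + 1 := by
    filter_upwards [hrR] with ω hω
    obtain ⟨h₁, h₂⟩ := abs_le.1 hω
    rw [Real.norm_eq_abs, abs_le]
    constructor <;> linarith
  have hd : ∀ᵐ ω ∂μ, ‖f ω - r ω‖ ≤ 2 * R := by
    filter_upwards [hfR, hrR] with ω h₁ h₂
    exact (norm_sub_le _ _).trans (by simp only [Real.norm_eq_abs]; linarith)
  have hdi : Integrable (fun ω => f ω - r ω) μ := hfi.sub integrable_condExp
  have hsm : StronglyMeasurable[m] fun ω => 2 * r ω - 1 :=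
    (hr.const_mul 2).sub stronglyMeasurable_const
  have horth : ∫ ω, (2 * r ω - 1) * (f ω - r ω) ∂μ = 0 := by
    rw [integral_mul_sub_eq_integral_mul_condExp_sub hm hsm hs hfi integrable_condExp]
    simp
  calc ∫ ω, (2 * f ω - 1) * (f ω - r ω) ∂μ
        = ∫ ω, (2 * (f ω - r ω) ^ 2 + (2 * r ω - 1) * (f ω - r ω)) ∂μ :=
          integral_congr_ae (ae_of_all _ fun ω => by ring)
    _ = 2 * ∫ ω, (f ω - r ω) ^ 2 ∂μ := by
      rw [integral_add, horth, add_zero, integral_const_mul]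
      · simpa only [sq] using (hdi.bdd_mul hdi.aestronglyMeasurable hd).const_mul 2
      · exact hdi.bdd_mul (hsm.mono hm).aestronglyMeasurable hs

end CondExp

theorem stmt4 {Ω 𝓧 : Type*} [MeasurableSpace Ω] [MeasurableSpace 𝓧]
    (P : Measure Ω) [IsProbabilityMeasure P]
    (X : Ω → 𝓧) (Y p G : Ω → ℝ) (μf : 𝓧 → ℝ) (τ : ℝ)
    (hX : Measurable X) (hp : Measurable p) (hG : Measurable G)
    (hμf : Measurable μf) (hY2 : MemLp Y 2 P)
    (hp01 : ∀ ω, p ω ∈ Set.Icc (0:ℝ) 1)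
    (hG01 : ∀ ω, G ω = 0 ∨ G ω = 1)
    (hmean : P[Y | mSig G ⊔ mSig p ⊔ mSig X] =ᵐ[P] fun ω => μf (X ω) + τ * G ω)
    (hcal : P[G | mSig p ⊔ mSig X] =ᵐ[P] p)
    (hV : 0 < ∫ ω, (p ω - (P[p | mSig X]) ω) ^ 2 ∂P) :
    τ = (∫ ω, (2 * p ω - 1) * (Y ω - (P[Y | mSig X]) ω) ∂P)
          / (2 * ∫ ω, (p ω - (P[p | mSig X]) ω) ^ 2 ∂P) := by
  have hA : mSig G ⊔ mSig p ⊔ mSig X ≤ ‹MeasurableSpace Ω› :=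
    sup_le (sup_le (mSig_le hG) (mSig_le hp)) (mSig_le hX)
  have hpX : mSig p ⊔ mSig X ≤ ‹MeasurableSpace Ω› := sup_le (mSig_le hp) (mSig_le hX)
  have hpXA : mSig p ⊔ mSig X ≤ mSig G ⊔ mSig p ⊔ mSig X := sup_le_sup_right le_sup_right _
  have hq : StronglyMeasurable[mSig p ⊔ mSig X] fun ω => 2 * p ω - 1 :=
    (((measurable_mSig p).const_mul 2).sub_const 1).stronglyMeasurable.mono le_sup_left
  have hqb : ∀ᵐ ω ∂P, ‖2 * p ω - 1‖ ≤ 1 := ae_of_all _ fun ω => by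
    obtain ⟨h₀, h₁⟩ := hp01 ω
    rw [Real.norm_eq_abs, abs_le]
    constructor <;> linarith
  have hGi : Integrable G P := (integrable_const (1 : ℝ)).mono' hG.aestronglyMeasurable
    (ae_of_all _ fun ω => by rcases hG01 ω with h | h <;> simp [h])
  have hGX : P[G|mSig X] =ᵐ[P] P[p|mSig X] :=
    (condExp_condExp_of_le (μ := P) (f := G) le_sup_right hpX).symm.trans
      (condExp_congr_ae hcal)
  have hm : P[Y|mSig X] =ᵐ[P] fun ω => μf (X ω) + τ * P[p|mSig X] ω := by
    filter_upwards [condExp_ae_eq_add_const_mul_of_le (f := fun ω => μf (X ω)) le_sup_right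
      hA (hμf.comp (measurable_mSig X)).stronglyMeasurable hGi hmean, hGX] with ω hY hG
    rw [hY, hG]
  have key : ∫ ω, (2 * p ω - 1) * (Y ω - P[Y|mSig X] ω) ∂P
      = τ * ∫ ω, (2 * p ω - 1) * (p ω - P[p|mSig X] ω) ∂P := calc
    _ = ∫ ω, (2 * p ω - 1) * (P[Y|mSig G ⊔ mSig p ⊔ mSig X] ω - P[Y|mSig X] ω) ∂P :=
      integral_mul_sub_eq_integral_mul_condExp_sub hA (hq.mono hpXA) hqb
        (hY2.integrable one_le_two) integrable_condExp
    _ = ∫ ω, τ * ((2 * p ω - 1) * (G ω - P[p|mSig X] ω)) ∂P :=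
      integral_congr_ae (by filter_upwards [hmean, hm] with ω h₁ h₂; rw [h₁, h₂]; ring)
    _ = τ * ∫ ω, (2 * p ω - 1) * (P[G|mSig p ⊔ mSig X] ω - P[p|mSig X] ω) ∂P := by
      rw [integral_const_mul,
        integral_mul_sub_eq_integral_mul_condExp_sub hpX hq hqb hGi integrable_condExp]
    _ = _ := by
      congr 1
      exact integral_congr_ae (by filter_upwards [hcal] with ω h; rw [h])
  rw [key, integral_two_mul_sub_one_mul_sub_condExp (mSig_le hX) hp.aestronglyMeasurable
    (ae_of_all _ fun ω => abs_le.2 ⟨by linarith [(hp01 ω).1], (hp01 ω).2⟩),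
    mul_div_cancel_right₀ _ (by positivity)]
end
end

section
/- Suppose E[Y | G, p, X] = μ(X) + τ·G a.s., E[G | p, X] = p a.s., r(X) := E[p | X] = 1/2 a.s., P(0 < p < 1) > 0, and for almost every x the conditional law of a := p − 1/2 given X = x is symmetric about zero with P(a = 0) = 0. Then E[Y − m(X) | p > 1/2] − E[Y − m(X) | p ≤ 1/2] = κ·τ, where κ = 2·E[|p − 1/2|] ∈ (0, 1), and m(X) = E[Y | X]. Moreover κ < 1 unless p ∈ {0,1} a.s., and κ > 0 whenever E[(p − r(X))²] > 0. -/
/-!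
Averaging the structural equation first over σ(p, X) and then over σ(X), using calibration
`E[G | p, X] = p` and `E[p | X] = 1/2`, gives `E[Y - m(X) | p, X] = τ (p - 1/2)`, where
`m(X) = μ(X) + τ/2`. Since `p - 1/2` is symmetric without an atom at `0`, both cells have
probability `1/2`, so the difference of the cell means is
`2τ (E[p - 1/2; p > 1/2] - E[p - 1/2; p ≤ 1/2]) = 2τ E|p - 1/2|`.
Finally `0 < E|p - 1/2|` because `p ≠ 1/2` a.s., and `E|p - 1/2| < 1/2` because
`|p - 1/2| < 1/2` on the non-null event `0 < p < 1`.
-/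

open MeasureTheory ProbabilityTheory

noncomputable section

namespace MeasureTheory

variable {Ω : Type*} [MeasurableSpace Ω] {P : Measure Ω}

theorem integral_pos_of_pos_on {f : Ω → ℝ} (hf : 0 ≤ f) (hfi : Integrable f P) {s : Set Ω}
    (hs : P s ≠ 0) (hpos : ∀ ω ∈ s, 0 < f ω) : 0 < ∫ ω, f ω ∂P := by
  rw [integral_pos_iff_support_of_nonneg hf hfi]
  exact (pos_iff_ne_zero.2 hs).trans_le (measure_mono fun ω hω => (hpos ω hω).ne')

theorem setIntegral_gt_sub_setIntegral_le [IsFiniteMeasure P] {f : Ω → ℝ} (hf : Measurable f)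
    (hfi : Integrable f P) (c : ℝ) :
    ∫ ω in {ω | c < f ω}, (f ω - c) ∂P - ∫ ω in {ω | f ω ≤ c}, (f ω - c) ∂P
      = ∫ ω, |f ω - c| ∂P := by
  have hA : MeasurableSet {ω | c < f ω} := measurableSet_lt measurable_const hf
  have hAc : {ω | c < f ω}ᶜ = {ω | f ω ≤ c} := by ext; simp
  have hint : Integrable (fun ω => |f ω - c|) P := (hfi.sub (integrable_const c)).abs
  rw [← integral_add_compl hA hint, hAc,
    setIntegral_congr_fun hA fun ω (hω : c < f ω) => abs_of_pos (sub_pos.2 hω),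
    setIntegral_congr_fun (measurableSet_le hf measurable_const)
      fun ω (hω : f ω ≤ c) => abs_of_nonpos (sub_nonpos.2 hω),
    integral_neg]
  ring

theorem integral_abs_sub_pos [IsProbabilityMeasure P] {f : Ω → ℝ} (hf : Measurable f)
    (hfi : Integrable f P) {c : ℝ} (hc : P {ω | f ω = c} = 0) : 0 < ∫ ω, |f ω - c| ∂P := by
  have hne : P {ω | f ω = c}ᶜ ≠ 0 := by
    rw [prob_compl_eq_one_sub (measurableSet_eq_fun hf measurable_const), hc]
    simp
  exact integral_pos_of_pos_on (fun _ => abs_nonneg _) (hfi.sub (integrable_const c)).abs hne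
    fun ω hω => abs_pos.2 (sub_ne_zero.2 hω)

theorem integral_abs_sub_half_lt_half [IsProbabilityMeasure P] {f : Ω → ℝ} (hf : Measurable f)
    (hf01 : ∀ ω, f ω ∈ Set.Icc (0 : ℝ) 1) (hpos : P {ω | 0 < f ω ∧ f ω < 1} ≠ 0) :
    ∫ ω, |f ω - 1/2| ∂P < 1/2 := by
  have hle : ∀ ω, |f ω - 1/2| ≤ 1/2 := fun ω =>
    abs_le.2 ⟨by linarith [(hf01 ω).1], by linarith [(hf01 ω).2]⟩
  have hint : Integrable (fun ω => |f ω - 1/2|) P :=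
    .of_bound (hf.sub_const _).abs.aestronglyMeasurable (1/2)
      (ae_of_all _ fun ω => by simpa using hle ω)
  have hgap : 0 < ∫ ω, (1/2 - |f ω - 1/2|) ∂P :=
    integral_pos_of_pos_on (fun ω => sub_nonneg.2 (hle ω)) ((integrable_const _).sub hint) hpos
      fun ω hω => sub_pos.2 (abs_lt.2 ⟨by linarith [hω.1], by linarith [hω.2]⟩)
  rw [integral_sub (integrable_const _) hint, integral_const] at hgap
  simpa using hgap

end MeasureTheory

namespace ProbabilityTheory

variable {Ω : Type*} [MeasurableSpace Ω] {P : Measure Ω}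

theorem integral_cond (f : Ω → ℝ) (s : Set Ω) :
    ∫ ω, f ω ∂(P[|s]) = (P.real s)⁻¹ * ∫ ω in s, f ω ∂P := by
  rw [cond, integral_smul_measure, ENNReal.toReal_inv]
  rfl

theorem map_eq_of_map_prodMk_eq {β γ : Type*} [MeasurableSpace β] [MeasurableSpace γ]
    {Z : Ω → β} {U V : Ω → γ} (hZ : Measurable Z) (hU : Measurable U) (hV : Measurable V)
    (h : P.map (fun ω => (Z ω, U ω)) = P.map (fun ω => (Z ω, V ω))) : P.map U = P.map V := by
  have := congrArg (Measure.map Prod.snd) h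
  rwa [Measure.map_map measurable_snd (hZ.prodMk hU),
    Measure.map_map measurable_snd (hZ.prodMk hV)] at this

theorem probReal_gt_eq_half_and_le_eq_half_of_symmetric [IsProbabilityMeasure P] {f : Ω → ℝ}
    (hf : Measurable f) {c : ℝ}
    (hsym : P.map (fun ω => f ω - c) = P.map (fun ω => -(f ω - c)))
    (hc : P {ω | f ω = c} = 0) :
    P.real {ω | c < f ω} = 1/2 ∧ P.real {ω | f ω ≤ c} = 1/2 := by
  have hfc : Measurable fun ω => f ω - c := hf.sub_const c
  have hgt : P {ω | c < f ω} = P {ω | f ω < c} := by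
    have h := congrArg (fun ν : Measure ℝ => ν (Set.Ioi 0)) hsym
    rw [Measure.map_apply hfc measurableSet_Ioi,
      Measure.map_apply (f := fun ω => -(f ω - c)) hfc.neg measurableSet_Ioi] at h
    simpa [Set.preimage, sub_pos] using h
  have hle : P {ω | f ω ≤ c} ≤ P {ω | f ω < c} :=
    calc P {ω | f ω ≤ c} ≤ P ({ω | f ω < c} ∪ {ω | f ω = c}) :=
          measure_mono fun ω (h : f ω ≤ c) => h.lt_or_eq
      _ ≤ P {ω | f ω < c} := (measure_union_le _ _).trans (by rw [hc, add_zero])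
  have heq : P.real {ω | c < f ω} = P.real {ω | f ω ≤ c} := by
    rw [measureReal_def, measureReal_def, hgt.trans
      (le_antisymm (measure_mono (Set.ofPred_subset_ofPred.2 fun ω h => le_of_lt h)) hle)]
  have hsum :=
    probReal_add_probReal_compl (μ := P) (measurableSet_lt (measurable_const (a := c)) hf)
  have hcompl : {ω | c < f ω}ᶜ = {ω | f ω ≤ c} := by ext; simp
  rw [hcompl] at hsum
  constructor <;> linarith

end ProbabilityTheory

section CondExp

variable {Ω : Type*} {m₁ m₂ m₃ mΩ : MeasurableSpace Ω} {P : @Measure Ω mΩ} [IsFiniteMeasure P]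
  {Y G g : Ω → ℝ} {τ : ℝ}

theorem setIntegral_eq_of_condExp_ae_eq (hm : m₁ ≤ mΩ) (hY : Integrable Y P)
    (h : P[Y | m₁] =ᵐ[P] g) {s : Set Ω} (hs : MeasurableSet[m₁] s) :
    ∫ ω in s, Y ω ∂P = ∫ ω in s, g ω ∂P :=
  (setIntegral_condExp hm hY hs).symm.trans
    (setIntegral_congr_ae (hm s hs) (h.mono fun _ hω _ => hω))

theorem condExp_eq_add_mul_condExp (h12 : m₁ ≤ m₂) (h23 : m₂ ≤ m₃) (h3 : m₃ ≤ mΩ)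
    (hg : StronglyMeasurable[m₁] g) (hG : Integrable G P)
    (h : P[Y | m₃] =ᵐ[P] fun ω => g ω + τ * G ω) :
    P[Y | m₂] =ᵐ[P] fun ω => g ω + τ * P[G | m₂] ω := by
  have hgi : Integrable g P :=
    ((integrable_condExp.congr h).sub (hG.const_mul τ)).congr (ae_of_all _ fun ω => by simp)
  have hsplit : P[fun ω => g ω + τ * G ω | m₂] =ᵐ[P] P[g | m₂] + τ • P[G | m₂] :=
    (condExp_add hgi (hG.const_mul τ) m₂).trans (.add .rfl (condExp_smul τ G m₂))
  calc P[Y | m₂] =ᵐ[P] P[P[Y | m₃] | m₂] := (condExp_condExp_of_le h23 h3).symm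
    _ =ᵐ[P] P[fun ω => g ω + τ * G ω | m₂] := condExp_congr_ae h
    _ =ᵐ[P] fun ω => g ω + τ * P[G | m₂] ω := by
      rw [condExp_of_stronglyMeasurable (h23.trans h3) (hg.mono h12) hgi] at hsplit
      exact hsplit

theorem condExp_sub_condExp_eq (h12 : m₁ ≤ m₂) (h23 : m₂ ≤ m₃) (h3 : m₃ ≤ mΩ)
    (hg : StronglyMeasurable[m₁] g) (hY : Integrable Y P) (hG : Integrable G P)
    (h : P[Y | m₃] =ᵐ[P] fun ω => g ω + τ * G ω) {q : Ω → ℝ} {c : ℝ}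
    (hq : P[G | m₂] =ᵐ[P] q) (hc : P[q | m₁] =ᵐ[P] fun _ => c) :
    P[fun ω => Y ω - P[Y | m₁] ω | m₂] =ᵐ[P] fun ω => τ * (q ω - c) := by
  have hY₂ := condExp_eq_add_mul_condExp h12 h23 h3 hg hG h
  have hY₁ := condExp_eq_add_mul_condExp le_rfl (h12.trans h23) h3 hg hG h
  have hG₁ : P[G | m₁] =ᵐ[P] fun _ => c :=
    (condExp_condExp_of_le h12 (h23.trans h3)).symm.trans ((condExp_congr_ae hq).trans hc)
  have hsub : P[fun ω => Y ω - P[Y | m₁] ω | m₂] =ᵐ[P] P[Y | m₂] - P[Y | m₁] := by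
    have := condExp_sub hY (integrable_condExp (m := m₁) (f := Y)) m₂
    rwa [condExp_of_stronglyMeasurable (h23.trans h3) (stronglyMeasurable_condExp.mono h12)
      integrable_condExp] at this
  filter_upwards [hsub, hY₂, hY₁, hq, hG₁] with ω hsub hY₂ hY₁ hq hG₁
  rw [hsub, Pi.sub_apply, hY₂, hY₁, hq, hG₁]
  ring

end CondExp

theorem stmt16 {Ω 𝓧 : Type*} [MeasurableSpace Ω] [MeasurableSpace 𝓧]
    (P : Measure Ω) [IsProbabilityMeasure P]
    (X : Ω → 𝓧) (Y p G : Ω → ℝ) (μf : 𝓧 → ℝ) (τ : ℝ)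
    (hX : Measurable X) (hp : Measurable p) (hG : Measurable G)
    (hμf : Measurable μf) (hY : Integrable Y P)
    (hp01 : ∀ ω, p ω ∈ Set.Icc (0:ℝ) 1)
    (hG01 : ∀ ω, G ω = 0 ∨ G ω = 1)
    (hmean : P[Y | mSig G ⊔ mSig p ⊔ mSig X] =ᵐ[P] fun ω => μf (X ω) + τ * G ω)
    (hcal : P[G | mSig p ⊔ mSig X] =ᵐ[P] p)
    (hr : P[p | mSig X] =ᵐ[P] fun _ => (1:ℝ)/2)
    (hpin : P {ω | 0 < p ω ∧ p ω < 1} ≠ 0)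
    (hsym : Measure.map (fun ω => (X ω, p ω - 1/2)) P
      = Measure.map (fun ω => (X ω, -(p ω - 1/2))) P)
    (h0 : P {ω | p ω = 1/2} = 0) :
    ((∫ ω, (Y ω - (P[Y | mSig X]) ω) ∂(ProbabilityTheory.cond P {ω | 1/2 < p ω}))
        - (∫ ω, (Y ω - (P[Y | mSig X]) ω) ∂(ProbabilityTheory.cond P {ω | p ω ≤ 1/2}))
      = (2 * ∫ ω, |p ω - 1/2| ∂P) * τ) ∧
    (0 < ∫ ω, (p ω - (P[p | mSig X]) ω) ^ 2 ∂P →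
      0 < 2 * ∫ ω, |p ω - 1/2| ∂P) ∧
    (¬ (∀ᵐ ω ∂P, p ω = 0 ∨ p ω = 1) → 2 * ∫ ω, |p ω - 1/2| ∂P < 1) := by
  have hpi : Integrable p P := .of_bound hp.aestronglyMeasurable 1 (ae_of_all _ fun ω => by
    rw [Real.norm_eq_abs, abs_le]; constructor <;> linarith [(hp01 ω).1, (hp01 ω).2])
  have hGi : Integrable G P := .of_bound hG.aestronglyMeasurable 1 (ae_of_all _ fun ω => by
    rcases hG01 ω with h | h <;> simp [h])
  have hres : ∀ S, MeasurableSet[mSig p] S →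
      ∫ ω in S, (Y ω - P[Y | mSig X] ω) ∂P = ∫ ω in S, τ * (p ω - 1/2) ∂P := fun S hS =>
    setIntegral_eq_of_condExp_ae_eq (sup_le hp.comap_le hX.comap_le)
      (hY.sub integrable_condExp)
      (condExp_sub_condExp_eq le_sup_right (sup_le_sup_right le_sup_right _)
        (sup_le (sup_le hG.comap_le hp.comap_le) hX.comap_le)
        (hμf.comp (comap_measurable X)).stronglyMeasurable hY hGi hmean hcal hr)
      (le_sup_left (b := mSig X) S hS)
  obtain ⟨hgt, hle⟩ := probReal_gt_eq_half_and_le_eq_half_of_symmetric hp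
    (map_eq_of_map_prodMk_eq hX (hp.sub_const _) (hp.sub_const _).neg hsym) h0
  refine ⟨?_, fun _ => mul_pos two_pos (integral_abs_sub_pos hp hpi h0),
    fun _ => by linarith [integral_abs_sub_half_lt_half hp hp01 hpin]⟩
  rw [integral_cond, integral_cond, hgt, hle,
    hres {ω | 1/2 < p ω} ⟨Set.Ioi (1/2), measurableSet_Ioi, rfl⟩,
    hres {ω | p ω ≤ 1/2} ⟨Set.Iic (1/2), measurableSet_Iic, rfl⟩, integral_const_mul,
    integral_const_mul, ← setIntegral_gt_sub_setIntegral_le hp hpi]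
  ring
end
end

section
/- Let ψ̃(τ, m, r) := 2(p − r(X))·(Y − m(X) − τ·(p − r(X))), with m(X) = E[Y | X] and r(X) = E[p | X]. Then for all bounded measurable directions δ_m and δ_r, both Gateaux derivatives (d/dh) E[ψ̃(τ, m + h·δ_m, r)]|_{h=0} and (d/dh) E[ψ̃(τ, m, r + h·δ_r)]|_{h=0} equal zero; i.e., the reformulated score is Neyman-orthogonal in both nuisance directions. -/
open MeasureTheory ProbabilityTheory

noncomputable section

/-! The score is a quadratic polynomial in the perturbation size `h`, so its expectation is too,
and the derivative at `0` is the expectation of the linear coefficient. That coefficient is a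
linear combination of products `g * (f - E[f | X])` of the bounded `σ(X)`-measurable direction `g`
with a residual, and such products have mean zero by the pull-out property of conditional
expectation. -/

theorem hasDerivAt_integral_quadratic {Ω : Type*} [MeasurableSpace Ω] {μ : Measure Ω}
    {F : ℝ → Ω → ℝ} {A B C : Ω → ℝ}
    (hA : Integrable A μ) (hB : Integrable B μ) (hC : Integrable C μ)
    (hF : ∀ h ω, F h ω = A ω + h * B ω + h ^ 2 * C ω) :
    HasDerivAt (fun h => ∫ ω, F h ω ∂μ) (∫ ω, B ω ∂μ) 0 := by
  have hpoly : (fun h => ∫ ω, F h ω ∂μ)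
      = fun h => ∫ ω, A ω ∂μ + h * ∫ ω, B ω ∂μ + h ^ 2 * ∫ ω, C ω ∂μ := by
    funext h
    have hAB : Integrable (fun ω => A ω + h * B ω) μ := hA.add (hB.const_mul h)
    simp_rw [hF]
    rw [integral_add hAB (hC.const_mul _),
      integral_add hA (hB.const_mul h), integral_const_mul, integral_const_mul]
  rw [hpoly]
  simpa using (((hasDerivAt_id' (0 : ℝ)).mul_const _).const_add _).fun_add
    ((hasDerivAt_pow 2 (0 : ℝ)).mul_const _)

section CondExp

variable {Ω : Type*} {m m0 : MeasurableSpace Ω} {μ : Measure Ω}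

theorem integral_mul_sub_condExp_eq_zero (hm : m ≤ m0) [SigmaFinite (μ.trim hm)]
    {g f : Ω → ℝ} {C : ℝ} (hg : StronglyMeasurable[m] g) (hgC : ∀ᵐ ω ∂μ, ‖g ω‖ ≤ C)
    (hf : Integrable f μ) :
    ∫ ω, g ω * (f ω - μ[f|m] ω) ∂μ = 0 := by
  have hg0 : AEStronglyMeasurable g μ := (hg.mono hm).aestronglyMeasurable
  have hgf : Integrable (fun ω => g ω * f ω) μ := hf.bdd_mul hg0 hgC
  have hgcf : Integrable (fun ω => g ω * μ[f|m] ω) μ := integrable_condExp.bdd_mul hg0 hgC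
  have pull_out : ∫ ω, g ω * f ω ∂μ = ∫ ω, g ω * μ[f|m] ω ∂μ := by
    rw [← integral_condExp hm]
    exact integral_congr_ae (condExp_mul_of_stronglyMeasurable_left hg hgf hf)
  simp only [mul_sub]
  rw [integral_sub hgf hgcf, pull_out, sub_self]

theorem ae_norm_sub_condExp_le {f : Ω → ℝ} {R : ℝ} (hf : ∀ᵐ ω ∂μ, ‖f ω‖ ≤ R) :
    ∀ᵐ ω ∂μ, ‖f ω - μ[f|m] ω‖ ≤ 2 * R := by
  simp only [Real.norm_eq_abs] at hf ⊢
  filter_upwards [hf, ae_bdd_abs_condExp_of_ae_bdd_abs (m := m) hf] with ω hfω hcω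
  linarith [abs_sub (f ω) (μ[f|m] ω)]

variable {Y p g : Ω → ℝ} {K C : ℝ}

theorem integrable_score (hm : m ≤ m0) (τ : ℝ) (hY : Integrable Y μ)
    (hp : Integrable p μ) (hpK : ∀ᵐ ω ∂μ, ‖p ω‖ ≤ K) :
    Integrable (fun ω => (p ω - μ[p|m] ω) * (2 * (Y ω - μ[Y|m] ω - τ * (p ω - μ[p|m] ω)))) μ := by
  have hcentered : Integrable (fun ω => 2 * (Y ω - μ[Y|m] ω - τ * (p ω - μ[p|m] ω))) μ :=
    ((hY.sub integrable_condExp).sub ((hp.sub integrable_condExp).const_mul τ)).const_mul 2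
  exact hcentered.bdd_mul
    (hp.aestronglyMeasurable.sub (stronglyMeasurable_condExp.mono hm).aestronglyMeasurable)
    (ae_norm_sub_condExp_le hpK)

theorem hasDerivAt_integral_score_add_outcome (hm : m ≤ m0) [SigmaFinite (μ.trim hm)] (τ : ℝ)
    (hY : Integrable Y μ) (hp : Integrable p μ) (hpK : ∀ᵐ ω ∂μ, ‖p ω‖ ≤ K)
    (hg : StronglyMeasurable[m] g) (hgC : ∀ᵐ ω ∂μ, ‖g ω‖ ≤ C) :
    HasDerivAt (fun h : ℝ => ∫ ω, 2 * (p ω - μ[p|m] ω)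
        * (Y ω - (μ[Y|m] ω + h * g ω) - τ * (p ω - μ[p|m] ω)) ∂μ) 0 0 := by
  have hgp : Integrable (fun ω => g ω * (p ω - μ[p|m] ω)) μ :=
    (hp.sub integrable_condExp).bdd_mul (hg.mono hm).aestronglyMeasurable hgC
  refine (hasDerivAt_integral_quadratic (integrable_score hm τ hY hp hpK) (hgp.const_mul (-2))
    (integrable_zero Ω ℝ μ) fun h ω => by simp only [Pi.zero_apply]; ring).congr_deriv ?_
  rw [integral_const_mul, integral_mul_sub_condExp_eq_zero hm hg hgC hp, mul_zero]

theorem hasDerivAt_integral_score_add_propensity [IsFiniteMeasure μ] (hm : m ≤ m0) (τ : ℝ)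
    (hY : Integrable Y μ) (hp : Integrable p μ) (hpK : ∀ᵐ ω ∂μ, ‖p ω‖ ≤ K)
    (hg : StronglyMeasurable[m] g) (hgC : ∀ᵐ ω ∂μ, ‖g ω‖ ≤ C) :
    HasDerivAt (fun h : ℝ => ∫ ω, 2 * (p ω - (μ[p|m] ω + h * g ω))
        * (Y ω - μ[Y|m] ω - τ * (p ω - (μ[p|m] ω + h * g ω))) ∂μ) 0 0 := by
  have hg0 : AEStronglyMeasurable g μ := (hg.mono hm).aestronglyMeasurable
  have hgp : Integrable (fun ω => g ω * (p ω - μ[p|m] ω)) μ :=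
    (hp.sub integrable_condExp).bdd_mul hg0 hgC
  have hgY : Integrable (fun ω => g ω * (Y ω - μ[Y|m] ω)) μ :=
    (hY.sub integrable_condExp).bdd_mul hg0 hgC
  have hgg : Integrable (fun ω => g ω * g ω) μ := (Integrable.of_bound hg0 C hgC).bdd_mul hg0 hgC
  refine (hasDerivAt_integral_quadratic (integrable_score hm τ hY hp hpK)
    (B := fun ω => 4 * τ * (g ω * (p ω - μ[p|m] ω)) - 2 * (g ω * (Y ω - μ[Y|m] ω)))
    ((hgp.const_mul _).sub (hgY.const_mul _)) (hgg.const_mul (-2 * τ))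
    fun h ω => by ring).congr_deriv ?_
  rw [integral_sub (hgp.const_mul _) (hgY.const_mul _), integral_const_mul, integral_const_mul,
    integral_mul_sub_condExp_eq_zero hm hg hgC hp, integral_mul_sub_condExp_eq_zero hm hg hgC hY]
  ring

end CondExp

theorem stmt18 {Ω 𝓧 : Type*} [MeasurableSpace Ω] [MeasurableSpace 𝓧]
    (P : Measure Ω) [IsProbabilityMeasure P]
    (X : Ω → 𝓧) (Y p : Ω → ℝ) (τ : ℝ) (δm δr : 𝓧 → ℝ)
    (hX : Measurable X) (hp : Measurable p)
    (hY2 : MemLp Y 2 P) (hp01 : ∀ ω, p ω ∈ Set.Icc (0:ℝ) 1)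
    (hδm : Measurable δm) (hδmb : ∃ C, ∀ x, |δm x| ≤ C)
    (hδr : Measurable δr) (hδrb : ∃ C, ∀ x, |δr x| ≤ C) :
    HasDerivAt (fun h : ℝ => ∫ ω, 2 * (p ω - (P[p | mSig X]) ω)
        * (Y ω - ((P[Y | mSig X]) ω + h * δm (X ω))
            - τ * (p ω - (P[p | mSig X]) ω)) ∂P) 0 0 ∧
    HasDerivAt (fun h : ℝ => ∫ ω, 2 * (p ω - ((P[p | mSig X]) ω + h * δr (X ω)))
        * (Y ω - (P[Y | mSig X]) ω
            - τ * (p ω - ((P[p | mSig X]) ω + h * δr (X ω)))) ∂P) 0 0 := by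
  obtain ⟨Cm, hCm⟩ := hδmb
  obtain ⟨Cr, hCr⟩ := hδrb
  have hm : mSig X ≤ ‹MeasurableSpace Ω› := hX.comap_le
  have hY : Integrable Y P := hY2.integrable one_le_two
  have hp1 : ∀ᵐ ω ∂P, ‖p ω‖ ≤ 1 := .of_forall fun ω =>
    (Real.norm_eq_abs _).trans_le (abs_le.2 ⟨by linarith [(hp01 ω).1], (hp01 ω).2⟩)
  have hpi : Integrable p P := .of_bound hp.aestronglyMeasurable 1 hp1
  have hdirection : ∀ δ : 𝓧 → ℝ, Measurable δ → StronglyMeasurable[mSig X] fun ω => δ (X ω) :=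
    fun δ hδ => (hδ.comp (comap_measurable X)).stronglyMeasurable
  exact ⟨hasDerivAt_integral_score_add_outcome hm τ hY hpi hp1 (hdirection δm hδm)
      (.of_forall fun ω => (Real.norm_eq_abs _).trans_le (hCm (X ω))),
    hasDerivAt_integral_score_add_propensity hm τ hY hpi hp1 (hdirection δr hδr)
      (.of_forall fun ω => (Real.norm_eq_abs _).trans_le (hCr (X ω)))⟩
end
end

section
/- Suppose the structural mean model holds with covariate-varying effect: E[Y | G, p, X] = μ(X) + τ(X)·G a.s., together with conditional calibration E[G | p, X] = p a.s. and finite second moments (τ(X) bounded). Then E[(2p − 1)(Y − m(X))] = 2·E[τ(X)·Var(p | X)], where m(X) = E[Y | X] and Var(p | X) = E[(p − r(X))² | X]. Consequently, if E[Var(p | X)] > 0, the ratio E[(2p−1)(Y−m(X))]/(2E[(p−r(X))²]) equals the variance-weighted average E[τ(X)·Var(p | X)] / E[Var(p | X)]. -/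
/-!
Conditioning the structural mean model on `(p, X)` replaces `G` by `p` (calibration), and
conditioning once more on `X` replaces `p` by `r(X)`; hence `E[Y - m(X) | p, X] = τ(X) (p - r(X))`.
Pulling out `2p - 1` and then `τ(X)`, the first claim reduces to
`E[(2p - 1)(p - r) | X] = 2 Var(p | X)`, which holds because
`(2p - 1)(p - r) = 2 (p - r)² + (2r - 1)(p - r)` and the last term has conditional mean zero.
The ratio follows from `E[(p - r)²] = E[Var(p | X)]`.
-/

open MeasureTheory ProbabilityTheory

noncomputable section

namespace HeterogeneousMoment

variable {Ω : Type*} {m m₁ m₂ m₀ : MeasurableSpace Ω} {μ : Measure Ω} [IsFiniteMeasure μ]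

theorem integral_mul_eq_integral_mul_condExp (hm : m ≤ m₀) {f g : Ω → ℝ}
    (hf : StronglyMeasurable[m] f) (hg : Integrable g μ) (c : ℝ)
    (hfc : ∀ᵐ ω ∂μ, ‖f ω‖ ≤ c) :
    ∫ ω, f ω * g ω ∂μ = ∫ ω, f ω * μ[g | m] ω ∂μ := by
  rw [← integral_condExp hm]
  exact integral_congr_ae (condExp_stronglyMeasurable_mul_of_bound hm hf hg c hfc)

theorem condExp_sub_condExp_of_le (hm₁₂ : m₁ ≤ m₂) (hm₂ : m₂ ≤ m₀) {f : Ω → ℝ}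
    (hf : Integrable f μ) :
    μ[fun ω => f ω - μ[f | m₁] ω | m₂] =ᵐ[μ] fun ω => μ[f | m₂] ω - μ[f | m₁] ω := by
  have h := condExp_sub hf (integrable_condExp (m := m₁) (f := f)) m₂
  rwa [condExp_of_stronglyMeasurable hm₂ (stronglyMeasurable_condExp.mono hm₁₂)
    integrable_condExp] at h

theorem condExp_mul_sub_condExp (hm : m ≤ m₀) {f g : Ω → ℝ} (hf : StronglyMeasurable[m] f)
    (hfg : Integrable (fun ω => f ω * (g ω - μ[g | m] ω)) μ) (hg : Integrable g μ) :
    μ[fun ω => f ω * (g ω - μ[g | m] ω) | m] =ᵐ[μ] 0 := by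
  refine (condExp_mul_of_stronglyMeasurable_left hf hfg (hg.sub integrable_condExp)).trans ?_
  filter_upwards [condExp_sub_condExp_of_le le_rfl hm hg] with ω hsub
  simp [hsub]

theorem condExp_affine_mul_sub_condExp (hm : m ≤ m₀) {p : Ω → ℝ} (hp : MemLp p 2 μ) (a b : ℝ) :
    μ[fun ω => (a * p ω - b) * (p ω - μ[p | m] ω) | m] =ᵐ[μ]
      fun ω => a * Var[p; μ | m] ω := by
  set r := μ[p | m]
  have hpr : MemLp (p - r) 2 μ := hp.sub (hp.condExp one_le_two)
  have hslope : Integrable (fun ω => a * (p ω - r ω) ^ 2) μ := hpr.integrable_sq.const_mul a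
  have hcentred : Integrable (fun ω => (a * r ω - b) * (p ω - r ω)) μ :=
    (((hp.condExp one_le_two).const_mul a).sub (memLp_const b)).integrable_mul hpr
  have hsplit : (fun ω => (a * p ω - b) * (p ω - r ω))
      = fun ω => a * (p ω - r ω) ^ 2 + (a * r ω - b) * (p ω - r ω) := by
    funext ω; ring
  have hslope_condExp : μ[fun ω => a * (p ω - r ω) ^ 2 | m] =ᵐ[μ] fun ω => a * Var[p; μ | m] ω :=
    condExp_smul a (fun ω => (p ω - r ω) ^ 2) m
  have hcentred_condExp : μ[fun ω => (a * r ω - b) * (p ω - r ω) | m] =ᵐ[μ] 0 :=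
    condExp_mul_sub_condExp hm
      ((stronglyMeasurable_condExp.const_mul a).sub stronglyMeasurable_const) hcentred
      (hp.integrable one_le_two)
  rw [hsplit]
  refine (condExp_add hslope hcentred m).trans ?_
  filter_upwards [hslope_condExp, hcentred_condExp] with ω h₁ h₂
  simp [h₁, h₂]

theorem condExp_add_mul_of_condExp_eq (hm₁₂ : m₁ ≤ m₂) (hm₂ : m₂ ≤ m₀) {Y G a b : Ω → ℝ}
    (ha : StronglyMeasurable[m₁] a) (hb : StronglyMeasurable[m₁] b) (c : ℝ)
    (hbc : ∀ᵐ ω ∂μ, ‖b ω‖ ≤ c) (hG : Integrable G μ)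
    (hY : μ[Y | m₂] =ᵐ[μ] fun ω => a ω + b ω * G ω) :
    μ[Y | m₁] =ᵐ[μ] fun ω => a ω + b ω * μ[G | m₁] ω := by
  have hm₁ : m₁ ≤ m₀ := hm₁₂.trans hm₂
  have hbG : Integrable (fun ω => b ω * G ω) μ :=
    hG.bdd_mul (hb.mono hm₁).aestronglyMeasurable hbc
  have ha_int : Integrable a μ := by
    refine ((integrable_condExp (m := m₂) (f := Y)).sub hbG).congr ?_
    filter_upwards [hY] with ω h
    simp [h]
  calc μ[Y | m₁] =ᵐ[μ] μ[μ[Y | m₂] | m₁] := (condExp_condExp_of_le hm₁₂ hm₂).symm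
    _ =ᵐ[μ] μ[fun ω => a ω + b ω * G ω | m₁] := condExp_congr_ae hY
    _ =ᵐ[μ] μ[a | m₁] + μ[fun ω => b ω * G ω | m₁] := condExp_add ha_int hbG m₁
    _ =ᵐ[μ] fun ω => a ω + b ω * μ[G | m₁] ω := by
      filter_upwards [condExp_stronglyMeasurable_mul_of_bound hm₁ hb hG c hbc] with ω h
      simp only [Pi.add_apply, condExp_of_stronglyMeasurable hm₁ ha ha_int]
      exact congrArg _ h

theorem integral_mul_sub_condExp_eq_of_condExp_eq (hm₁₂ : m₁ ≤ m₂) (hm₂ : m₂ ≤ m₀)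
    {Y p a b : Ω → ℝ} (hp : StronglyMeasurable[m₂] p) (K : ℝ) (hpK : ∀ᵐ ω ∂μ, ‖p ω‖ ≤ K)
    (ha : StronglyMeasurable[m₁] a) (hb : StronglyMeasurable[m₁] b) (c : ℝ)
    (hbc : ∀ᵐ ω ∂μ, ‖b ω‖ ≤ c) (hY : Integrable Y μ)
    (hYp : μ[Y | m₂] =ᵐ[μ] fun ω => a ω + b ω * p ω) :
    ∫ ω, (2 * p ω - 1) * (Y ω - μ[Y | m₁] ω) ∂μ = 2 * ∫ ω, b ω * Var[p; μ | m₁] ω ∂μ := by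
  have hp₂ : MemLp p 2 μ := MemLp.of_bound (hp.mono hm₂).aestronglyMeasurable K hpK
  have hp_int : Integrable p μ := hp₂.integrable one_le_two
  have hYm₁ := condExp_add_mul_of_condExp_eq hm₁₂ hm₂ ha hb c hbc hp_int hYp
  have hresidual : μ[fun ω => Y ω - μ[Y | m₁] ω | m₂] =ᵐ[μ]
      fun ω => b ω * (p ω - μ[p | m₁] ω) := by
    filter_upwards [condExp_sub_condExp_of_le hm₁₂ hm₂ hY, hYp, hYm₁] with ω h h₂ h₁
    rw [h, h₂, h₁]
    ring
  have hweight : ∀ᵐ ω ∂μ, ‖2 * p ω - 1‖ ≤ 2 * K + 1 := by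
    filter_upwards [hpK] with ω h
    calc ‖2 * p ω - 1‖ ≤ ‖2 * p ω‖ + ‖(1 : ℝ)‖ := norm_sub_le _ _
      _ ≤ 2 * K + 1 := by rw [norm_mul, Real.norm_two, norm_one]; linarith
  have hmoment_int : Integrable (fun ω => (2 * p ω - 1) * (p ω - μ[p | m₁] ω)) μ :=
    (hp_int.sub integrable_condExp).bdd_mul
      (((hp.const_mul 2).sub stronglyMeasurable_const).mono hm₂).aestronglyMeasurable hweight
  calc ∫ ω, (2 * p ω - 1) * (Y ω - μ[Y | m₁] ω) ∂μ
      = ∫ ω, (2 * p ω - 1) * μ[fun ω => Y ω - μ[Y | m₁] ω | m₂] ω ∂μ :=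
        integral_mul_eq_integral_mul_condExp hm₂ ((hp.const_mul 2).sub stronglyMeasurable_const)
          (hY.sub integrable_condExp) _ hweight
    _ = ∫ ω, b ω * ((2 * p ω - 1) * (p ω - μ[p | m₁] ω)) ∂μ :=
        integral_congr_ae (by filter_upwards [hresidual] with ω h; rw [h]; ring)
    _ = ∫ ω, b ω * μ[fun ω => (2 * p ω - 1) * (p ω - μ[p | m₁] ω) | m₁] ω ∂μ :=
        integral_mul_eq_integral_mul_condExp (hm₁₂.trans hm₂) hb hmoment_int c hbc
    _ = ∫ ω, 2 * (b ω * Var[p; μ | m₁] ω) ∂μ :=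
        integral_congr_ae (by
          filter_upwards [condExp_affine_mul_sub_condExp (hm₁₂.trans hm₂) hp₂ 2 1] with ω h
          rw [h]; ring)
    _ = 2 * ∫ ω, b ω * Var[p; μ | m₁] ω ∂μ := integral_const_mul 2 _

end HeterogeneousMoment

open HeterogeneousMoment in
theorem stmt19 {Ω 𝓧 : Type*} [MeasurableSpace Ω] [MeasurableSpace 𝓧]
    (P : Measure Ω) [IsProbabilityMeasure P]
    (X : Ω → 𝓧) (Y p G : Ω → ℝ) (μf τf : 𝓧 → ℝ)
    (hX : Measurable X) (hp : Measurable p) (hG : Measurable G)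
    (hμf : Measurable μf) (hτf : Measurable τf) (hτfb : ∃ C, ∀ x, |τf x| ≤ C)
    (hY2 : MemLp Y 2 P)
    (hp01 : ∀ ω, p ω ∈ Set.Icc (0:ℝ) 1)
    (hG01 : ∀ ω, G ω = 0 ∨ G ω = 1)
    (hmean : P[Y | mSig G ⊔ mSig p ⊔ mSig X]
      =ᵐ[P] fun ω => μf (X ω) + τf (X ω) * G ω)
    (hcal : P[G | mSig p ⊔ mSig X] =ᵐ[P] p) :
    (∫ ω, (2 * p ω - 1) * (Y ω - (P[Y | mSig X]) ω) ∂P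
      = 2 * ∫ ω, τf (X ω)
          * (P[fun ω' => (p ω' - (P[p | mSig X]) ω') ^ 2 | mSig X]) ω ∂P) ∧
    (0 < ∫ ω, (p ω - (P[p | mSig X]) ω) ^ 2 ∂P →
      (∫ ω, (2 * p ω - 1) * (Y ω - (P[Y | mSig X]) ω) ∂P)
          / (2 * ∫ ω, (p ω - (P[p | mSig X]) ω) ^ 2 ∂P)
        = (∫ ω, τf (X ω)
            * (P[fun ω' => (p ω' - (P[p | mSig X]) ω') ^ 2 | mSig X]) ω ∂P)
          / ∫ ω, (P[fun ω' => (p ω' - (P[p | mSig X]) ω') ^ 2 | mSig X]) ω ∂P) := by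
  obtain ⟨C, hC⟩ := hτfb
  have hmX : mSig X ≤ ‹MeasurableSpace Ω› := hX.comap_le
  have hmpX : mSig p ⊔ mSig X ≤ ‹MeasurableSpace Ω› := sup_le hp.comap_le hmX
  have hmGpX : mSig G ⊔ mSig p ⊔ mSig X ≤ ‹MeasurableSpace Ω› :=
    sup_le (sup_le hG.comap_le hp.comap_le) hmX
  have hXpX : mSig X ≤ mSig p ⊔ mSig X := le_sup_right
  have hXm : Measurable[mSig X] X := comap_measurable X
  have hpm : StronglyMeasurable[mSig p ⊔ mSig X] p :=
    (comap_measurable p : Measurable[mSig p] p).stronglyMeasurable.mono le_sup_left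
  have hμX : StronglyMeasurable[mSig X] fun ω => μf (X ω) := (hμf.comp hXm).stronglyMeasurable
  have hτX : StronglyMeasurable[mSig X] fun ω => τf (X ω) := (hτf.comp hXm).stronglyMeasurable
  have hτC : ∀ᵐ ω ∂P, ‖τf (X ω)‖ ≤ C := ae_of_all _ fun ω => hC (X ω)
  have hG_int : Integrable G P :=
    Integrable.of_bound hG.aestronglyMeasurable 1
      (ae_of_all _ fun ω => by rcases hG01 ω with h | h <;> simp [h])
  have hp_le_one : ∀ᵐ ω ∂P, ‖p ω‖ ≤ 1 := ae_of_all _ fun ω => by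
    rw [Real.norm_eq_abs, abs_le]
    constructor <;> linarith [(hp01 ω).1, (hp01 ω).2]
  have hYpX : P[Y | mSig p ⊔ mSig X] =ᵐ[P] fun ω => μf (X ω) + τf (X ω) * p ω := by
    filter_upwards [condExp_add_mul_of_condExp_eq (sup_le_sup_right le_sup_right _) hmGpX
      (hμX.mono hXpX) (hτX.mono hXpX) C hτC hG_int hmean, hcal] with ω htower hcalω
    rw [htower, hcalω]
  have hmoment := integral_mul_sub_condExp_eq_of_condExp_eq hXpX hmpX hpm 1 hp_le_one
    hμX hτX C hτC (hY2.integrable one_le_two) hYpX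
  refine ⟨hmoment, fun _ => ?_⟩
  have hvar : ∫ ω, (p ω - P[p | mSig X] ω) ^ 2 ∂P = ∫ ω, Var[p; P | mSig X] ω ∂P :=
    (integral_condExp hmX).symm
  rw [hmoment, hvar]
  exact mul_div_mul_left _ _ two_ne_zero
end
end
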